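/- Let T be defined as follows: T_1(δ_l, (l, …, l)) = w(l) and T_1 = 0 otherwise; for h ≥ 1, with m = min(h, k), T_{h+1}(κ, (l, u₁, …, u_{k−1})) = Σ_{u_k ∈ Fin p} T_h(κ − δ_l, (u₁, …, u_k)) · w(l) · (∏_{s=1}^{m} r̃_s(u_s)(l)) · ∏_i r(i)(l)^{(κ − δ_l − Σ_{s=1}^{m} δ_{u_s})(i)} when κ(l) ≥ 1 and the exponent vector is componentwise nonnegative (terms with a negative component omitted), and 0 otherwise. Then for every n > k, Σ_{κ : Σκ = n} Σ_{(t₁,…,t_k) ∈ (Fin p)^k} T_n(κ, (t₁, …, t_k)) = Σ_{c : Fin n → Fin p} W^{(k)}_n(c). -/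

import Mathlib

open Finset

/-- The cell configuration of a cell assignment. -/
def cellConfig {p n : ℕ} (c : Fin n → Fin p) : Fin p → ℕ :=
  fun i => (Finset.univ.filter (fun a => c a = i)).card

/-- The indicator vector `δ_l`. -/
def delta {p : ℕ} (l : Fin p) : Fin p → ℕ := fun i => if i = l then 1 else 0

/-- The `k`-predecessor weight `W^{(k)}` of a cell assignment. -/
def kW {R : Type*} [CommRing R] {p n : ℕ} (k : ℕ) (w : Fin p → R)
    (r : Fin p → Fin p → R) (rt : ℕ → Fin p → Fin p → R) (c : Fin n → Fin p) : R :=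
  (∏ a, w (c a)) *
    (∏ a : Fin n, ∏ b ∈ Finset.univ.filter
        (fun b : Fin n => (a : ℕ) < (b : ℕ) ∧ (b : ℕ) - (a : ℕ) > k),
      r (c a) (c b)) *
    ∏ s ∈ Finset.Icc 1 k, ∏ a : Fin n,
      ∏ b ∈ Finset.univ.filter (fun b : Fin n => (b : ℕ) = (a : ℕ) + s),
        rt s (c a) (c b)

/-- The dynamic-programming table of IncrementalWFOMC2 for the general `k`-th
predecessor relations. -/
def Tk {R : Type*} [CommRing R] {p : ℕ} (k : ℕ) (w : Fin p → R)
    (r : Fin p → Fin p → R) (rt : ℕ → Fin p → Fin p → R) :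
    ℕ → (Fin p → ℕ) → (Fin k → Fin p) → R
  | 0, _, _ => 0
  | 1, κ, t => ∑ l : Fin p, if κ = delta l ∧ t = fun _ => l then w l else 0
  | h + 2, κ, t =>
      if hkpos : 0 < k then
        let l : Fin p := t ⟨0, hkpos⟩
        let m : ℕ := min (h + 1) k
        if 1 ≤ κ l then
          ∑ uk : Fin p,
            let u : Fin k → Fin p :=
              fun i => if hi : (i : ℕ) + 1 < k then t ⟨(i : ℕ) + 1, hi⟩ else uk
            let uc : ℕ → Fin p := fun s => if hs : s < k then u ⟨s, hs⟩ else l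
            let need : Fin p → ℕ :=
              fun i => delta l i + ∑ s ∈ Finset.range m, delta (uc s) i
            if ∀ i, need i ≤ κ i then
              Tk k w r rt (h + 1) (κ - delta l) u * w l *
                (∏ s ∈ Finset.range m, rt (s + 1) (uc s) l) *
                ∏ i, r i l ^ (κ i - need i)
            else 0
        else 0
      else 0

/-! The table entry `Tk k w r rt (n + 1) κ t` is the total weight `kW` of the cell assignments
`c : Fin (n + 1) → Fin p` with configuration `κ` whose last `k` cells, read backwards, are `t`.
This follows by induction on `n`: appending a cell `l` to `c` multiplies its weight by `w l`, by
the factors `r̃_s (c (n + 1 - s)) l` for the `min (n + 1) k` nearest positions, and by `r (c a) l`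
for all farther positions `a`; grouping the latter by cell gives exactly the powers
`r i l ^ (κ i - …)` of the recursion. Summing over all `κ` and `t` then counts every assignment
once. -/

lemma sum_pi_fin_succ_eq_sum_snoc {α M : Type*} [Fintype α] [AddCommMonoid M] {n : ℕ}
    (G : (Fin (n + 1) → α) → M) :
    ∑ c', G c' = ∑ c : Fin n → α, ∑ l, G (Fin.snoc c l) := by
  rw [← (Fin.snocEquiv fun _ => α).sum_comp, Fintype.sum_prod_type, sum_comm]
  rfl

lemma prod_prod_filter_snoc {α M : Type*} [CommMonoid M] {n : ℕ} (Q : ℕ → ℕ → Prop)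
    [DecidableRel Q] (hQ : ∀ a b, Q a b → a < b) (F : α → α → M) (c : Fin n → α) (l : α) :
    ∏ a : Fin (n + 1), ∏ b ∈ univ.filter (fun b : Fin (n + 1) => Q a b),
        F (Fin.snoc (α := fun _ => α) c l a) (Fin.snoc (α := fun _ => α) c l b) =
      (∏ a : Fin n, ∏ b ∈ univ.filter (fun b : Fin n => Q a b), F (c a) (c b)) *
        ∏ a ∈ univ.filter (fun a : Fin n => Q a n), F (c a) l := by
  have hlast : ∀ b : ℕ, b ≤ n → ¬ Q n b := fun b hb h => by have := hQ _ _ h; omega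
  simp only [prod_filter, Fin.prod_univ_castSucc, Fin.snoc_castSucc, Fin.snoc_last,
    Fin.val_castSucc, Fin.val_last, prod_mul_distrib, hlast _ le_rfl,
    fun b : Fin n => hlast b b.is_lt.le, if_false, prod_const_one, mul_one]

lemma prod_Icc_prod_filter_eq_prod_range {M : Type*} [CommMonoid M] (n k : ℕ)
    (f : ℕ → Fin (n + 1) → M) :
    ∏ s ∈ Icc 1 k, ∏ a ∈ univ.filter (fun a : Fin (n + 1) => n + 1 = (a : ℕ) + s), f s a =
      ∏ s ∈ range (min (n + 1) k), f (s + 1) ⟨n - s, by omega⟩ := by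
  simp only [prod_filter]
  rw [← prod_product' (f := fun s (a : Fin (n + 1)) => if n + 1 = (a : ℕ) + s then f s a else 1),
    ← prod_filter]
  have hinv : ∀ x ∈ (Icc 1 k ×ˢ univ).filter (fun x : ℕ × Fin (n + 1) => n + 1 = x.2 + x.1),
      (x.1 - 1 + 1, (⟨n - (x.1 - 1), by omega⟩ : Fin (n + 1))) = x := by
    rintro ⟨s, a⟩ h
    simp only [mem_filter, mem_product, mem_Icc] at h
    exact Prod.ext (by dsimp only; omega) (Fin.ext (by dsimp only; omega))
  refine prod_nbij' (fun x => x.1 - 1) (fun s => (s + 1, ⟨n - s, by omega⟩)) ?_ ?_ hinv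
    (fun s _ => Nat.add_sub_cancel s 1) fun x hx => congrArg (fun y => f y.1 y.2) (hinv x hx).symm
  · rintro ⟨s, a⟩ h
    simp only [mem_filter, mem_product, mem_Icc, mem_range] at h ⊢
    omega
  · intro s h
    simp only [mem_filter, mem_product, mem_Icc, mem_univ, and_true, mem_range] at h ⊢
    omega

section

variable {p : ℕ}

/-- When `n + 1 < k` the truncated subtraction repeats cell `0`; this is what makes the constant
window of `T_1` fit the pattern. -/
def lastCells {n : ℕ} (k : ℕ) (c : Fin (n + 1) → Fin p) : Fin k → Fin p :=
  fun j => c ⟨n - j, Nat.lt_succ_of_le (Nat.sub_le n j)⟩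

def shiftIn {k : ℕ} (t : Fin k → Fin p) (uk : Fin p) : Fin k → Fin p :=
  fun i => if hi : (i : ℕ) + 1 < k then t ⟨i + 1, hi⟩ else uk

lemma lastCells_snoc_zero {n k : ℕ} (hk : 0 < k) (c : Fin (n + 1) → Fin p) (l : Fin p) :
    lastCells k (Fin.snoc c l : Fin (n + 2) → Fin p) ⟨0, hk⟩ = l :=
  Fin.snoc_last (α := fun _ => Fin p) l c

lemma lastCells_snoc_succ {n k : ℕ} (c : Fin (n + 1) → Fin p) (l : Fin p) (j : ℕ)
    (hj : j + 1 < k) :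
    lastCells k (Fin.snoc c l : Fin (n + 2) → Fin p) ⟨j + 1, hj⟩ =
      lastCells k c ⟨j, by omega⟩ := by
  have h : (⟨n + 1 - (j + 1), by omega⟩ : Fin (n + 2)) = Fin.castSucc ⟨n - j, by omega⟩ :=
    Fin.ext (by simp)
  simp only [lastCells, h, Fin.snoc_castSucc]

lemma lastCells_eq_shiftIn_iff {n k : ℕ} (hk : 0 < k) (c : Fin (n + 1) → Fin p)
    (t : Fin k → Fin p) (uk : Fin p) :
    lastCells k c = shiftIn t uk ↔
      lastCells k (Fin.snoc c (t ⟨0, hk⟩) : Fin (n + 2) → Fin p) = t ∧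
        lastCells k c ⟨k - 1, by omega⟩ = uk := by
  simp only [funext_iff, Fin.forall_iff, shiftIn]
  constructor
  · intro h
    refine ⟨fun j hj => ?_, ?_⟩
    · cases j with
      | zero => exact lastCells_snoc_zero hk c _
      | succ j => rw [lastCells_snoc_succ c _ j hj, h j (by omega), dif_pos hj]
    · simpa [dif_neg (show ¬(k - 1 + 1 < k) by omega)] using h (k - 1) (by omega)
  · rintro ⟨h, hlast⟩ j hj
    split_ifs with hj'
    · rw [← h (j + 1) hj', lastCells_snoc_succ]
    · obtain rfl : j = k - 1 := by omega
      exact hlast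

lemma sum_ite_lastCells_eq_shiftIn {M : Type*} [AddCommMonoid M] {n k : ℕ} (hk : 0 < k)
    (c : Fin (n + 1) → Fin p) (t : Fin k → Fin p) (P : Prop) [Decidable P] (x : M) :
    ∑ uk, (if P ∧ lastCells k c = shiftIn t uk then x else 0) =
      if P ∧ lastCells k (Fin.snoc c (t ⟨0, hk⟩) : Fin (n + 2) → Fin p) = t then x else 0 := by
  rw [sum_eq_single (lastCells k c ⟨k - 1, by omega⟩)]
  · simp only [lastCells_eq_shiftIn_iff hk, and_true]
  · intro uk _ huk
    refine if_neg fun h => huk ?_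
    exact ((lastCells_eq_shiftIn_iff hk c t uk).1 h.2).2.symm
  · simp

lemma sum_ite_lastCells_snoc {M : Type*} [AddCommMonoid M] {n k : ℕ} (hk : 0 < k)
    (c : Fin (n + 1) → Fin p) (t : Fin k → Fin p) (P : (Fin (n + 2) → Fin p) → Prop)
    [DecidablePred P] (G : (Fin (n + 2) → Fin p) → M) :
    ∑ l, (if P (Fin.snoc c l) ∧ lastCells k (Fin.snoc c l : Fin (n + 2) → Fin p) = t
      then G (Fin.snoc c l) else 0) =
      if P (Fin.snoc c (t ⟨0, hk⟩)) ∧ lastCells k (Fin.snoc c (t ⟨0, hk⟩) : Fin (n + 2) → Fin p) = t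
        then G (Fin.snoc c (t ⟨0, hk⟩)) else 0 := by
  refine sum_eq_single (t ⟨0, hk⟩) (fun l _ hl => if_neg fun h => hl ?_) (by simp)
  rw [← h.2, lastCells_snoc_zero]

lemma cellConfig_snoc {n : ℕ} (c : Fin n → Fin p) (l : Fin p) :
    cellConfig (Fin.snoc c l : Fin (n + 1) → Fin p) = cellConfig c + delta l := by
  funext i
  simp only [cellConfig, delta, card_filter, Fin.sum_univ_castSucc, Fin.snoc_castSucc,
    Fin.snoc_last, Pi.add_apply, eq_comm]

lemma cellConfig_fin_one (c : Fin 1 → Fin p) : cellConfig c = delta (c 0) := by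
  funext i
  simp only [cellConfig, delta, card_filter, Fin.sum_univ_one, eq_comm]

lemma sum_cellConfig {n : ℕ} (c : Fin n → Fin p) : ∑ i, cellConfig c i = n := by
  simp only [cellConfig]
  rw [← card_eq_sum_card_fiberwise (fun a _ => mem_univ (c a)), card_univ, Fintype.card_fin]

lemma cellConfig_eq_card_add_sum {n : ℕ} (k : ℕ) (c : Fin (n + 1) → Fin p) (i : Fin p) :
    cellConfig c i = #(univ.filter (fun a : Fin (n + 1) => (a : ℕ) + k < n + 1 ∧ c a = i)) +
      ∑ s ∈ range (min (n + 1) k), delta (c ⟨n - s, by omega⟩) i := by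
  have hnear : ∑ a ∈ univ.filter (fun a : Fin (n + 1) => ¬ (a : ℕ) + k < n + 1),
      (if c a = i then 1 else 0) =
        ∑ s ∈ range (min (n + 1) k), delta (c ⟨n - s, by omega⟩) i := by
    have hinv : ∀ a : Fin (n + 1), (⟨n - (n - a), by omega⟩ : Fin (n + 1)) = a :=
      fun a => Fin.ext (Nat.sub_sub_self (Nat.lt_succ_iff.1 a.is_lt))
    refine sum_nbij' (fun a => n - a) (fun s => ⟨n - s, by omega⟩) ?_ ?_
      (fun a _ => hinv a) ?_ (fun a _ => by simp only [delta, eq_comm, hinv])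
    · intro a ha
      simp only [mem_filter, mem_univ, true_and, mem_range] at ha ⊢
      omega
    · intro s hs
      simp only [mem_filter, mem_univ, true_and, mem_range] at hs ⊢
      omega
    · intro s hs
      exact Nat.sub_sub_self (by simp only [mem_range] at hs; omega)
  rw [cellConfig, card_filter, ← sum_filter_add_sum_filter_not _
    (fun a : Fin (n + 1) => (a : ℕ) + k < n + 1), hnear, card_filter, sum_filter]
  simp only [ite_and]

section Weight

variable {R : Type*} [CommRing R] (k : ℕ) (w : Fin p → R) (r : Fin p → Fin p → R)
  (rt : ℕ → Fin p → Fin p → R)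

lemma kW_fin_one (c : Fin 1 → Fin p) : kW k w r rt c = w (c 0) := by
  simp only [kW, Fin.prod_univ_one]
  rw [prod_eq_one, prod_eq_one, mul_one, mul_one]
  · intro s hs
    simp only [mem_Icc] at hs
    exact prod_eq_one fun b hb => by
      simp only [mem_filter, Fin.val_eq_zero] at hb
      omega
  · intro b hb
    simp at hb

lemma kW_snoc {n : ℕ} (c : Fin (n + 1) → Fin p) (l : Fin p) :
    kW k w r rt (Fin.snoc c l : Fin (n + 2) → Fin p) =
      kW k w r rt c * w l * (∏ s ∈ range (min (n + 1) k), rt (s + 1) (c ⟨n - s, by omega⟩) l) *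
        ∏ a ∈ univ.filter (fun a : Fin (n + 1) => (a : ℕ) + k < n + 1), r (c a) l := by
  have hw : ∏ a : Fin (n + 2), w (Fin.snoc (α := fun _ => Fin p) c l a) =
      (∏ a, w (c a)) * w l := by
    simp [Fin.prod_univ_castSucc]
  have hr := prod_prod_filter_snoc (fun a b => a < b ∧ b - a > k) (fun _ _ h => h.1) r c l
  have hrt : ∀ s ∈ Icc 1 k, ∏ a : Fin (n + 2),
      ∏ b ∈ univ.filter (fun b : Fin (n + 2) => (b : ℕ) = a + s),
        rt s (Fin.snoc (α := fun _ => Fin p) c l a) (Fin.snoc (α := fun _ => Fin p) c l b) =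
      (∏ a : Fin (n + 1), ∏ b ∈ univ.filter (fun b : Fin (n + 1) => (b : ℕ) = a + s),
        rt s (c a) (c b)) *
        ∏ a ∈ univ.filter (fun a : Fin (n + 1) => n + 1 = (a : ℕ) + s), rt s (c a) l :=
    fun s hs => prod_prod_filter_snoc (fun a b => b = a + s)
      (fun _ _ h => by simp only [mem_Icc] at hs; omega) _ c l
  have hfar : univ.filter (fun a : Fin (n + 1) => (a : ℕ) < n + 1 ∧ n + 1 - a > k) =
      univ.filter (fun a : Fin (n + 1) => (a : ℕ) + k < n + 1) :=
    filter_congr fun a _ => by omega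
  simp only [kW, hw, hr, hfar, prod_congr rfl hrt, prod_mul_distrib,
    prod_Icc_prod_filter_eq_prod_range n k (fun s a => rt s (c a) l)]
  ring

def stepFactor (m : ℕ) (κ : Fin p → ℕ) (u : Fin k → Fin p) (l : Fin p) : R :=
  let uc : ℕ → Fin p := fun s => if hs : s < k then u ⟨s, hs⟩ else l
  let need : Fin p → ℕ := fun i => delta l i + ∑ s ∈ range (min m k), delta (uc s) i
  if ∀ i, need i ≤ κ i then
    w l * (∏ s ∈ range (min m k), rt (s + 1) (uc s) l) * ∏ i, r i l ^ (κ i - need i)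
  else 0

lemma stepFactor_eq_zero {m : ℕ} {κ : Fin p → ℕ} (u : Fin k → Fin p) {l : Fin p}
    (hκ : κ l = 0) : stepFactor k w r rt m κ u l = 0 := by
  refine if_neg fun h => ?_
  have := h l
  simp only [delta, if_true] at this
  omega

lemma Tk_add_two (hk : 0 < k) (h : ℕ) (κ : Fin p → ℕ) (t : Fin k → Fin p) :
    Tk k w r rt (h + 2) κ t =
      ∑ uk, Tk k w r rt (h + 1) (κ - delta (t ⟨0, hk⟩)) (shiftIn t uk) *
        stepFactor k w r rt (h + 1) κ (shiftIn t uk) (t ⟨0, hk⟩) := by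
  rw [Tk, dif_pos hk]
  dsimp only
  split_ifs with hl
  · refine sum_congr rfl fun uk _ => ?_
    simp only [stepFactor, shiftIn]
    split_ifs
    · simp only [mul_assoc]
      rfl
    · rw [mul_zero]
  · exact (sum_eq_zero fun uk _ => by
      rw [stepFactor_eq_zero k w r rt _ (by omega), mul_zero]).symm

lemma kW_snoc_eq_mul_stepFactor {n : ℕ} (c : Fin (n + 1) → Fin p) (l : Fin p) :
    kW k w r rt (Fin.snoc c l : Fin (n + 2) → Fin p) =
      kW k w r rt c * stepFactor k w r rt (n + 1) (cellConfig c + delta l) (lastCells k c) l := by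
  have hwindow : ∀ s ∈ range (min (n + 1) k),
      (if hs : s < k then lastCells k c ⟨s, hs⟩ else l) = c ⟨n - s, by omega⟩ :=
    fun s hs => dif_pos (by simp only [mem_range] at hs; omega)
  have hneed : ∀ i, ∑ s ∈ range (min (n + 1) k),
      delta (if hs : s < k then lastCells k c ⟨s, hs⟩ else l) i =
      ∑ s ∈ range (min (n + 1) k), delta (c ⟨n - s, by omega⟩) i :=
    fun i => sum_congr rfl fun s hs => by rw [hwindow s hs]
  have hrt : ∏ s ∈ range (min (n + 1) k),
      rt (s + 1) (if hs : s < k then lastCells k c ⟨s, hs⟩ else l) l =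
      ∏ s ∈ range (min (n + 1) k), rt (s + 1) (c ⟨n - s, by omega⟩) l :=
    prod_congr rfl fun s hs => by rw [hwindow s hs]
  have hcount := cellConfig_eq_card_add_sum k c
  have hexp : ∀ i, cellConfig c i + delta l i -
      (delta l i + ∑ s ∈ range (min (n + 1) k), delta (c ⟨n - s, by omega⟩) i) =
      #(univ.filter (fun a : Fin (n + 1) => (a : ℕ) + k < n + 1 ∧ c a = i)) :=
    fun i => by rw [hcount i]; omega
  have hfar : ∏ a ∈ univ.filter (fun a : Fin (n + 1) => (a : ℕ) + k < n + 1), r (c a) l =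
      ∏ i, r i l ^ #(univ.filter (fun a : Fin (n + 1) => (a : ℕ) + k < n + 1 ∧ c a = i)) := by
    rw [← prod_fiberwise' _ c (fun i => r i l)]
    simp only [prod_const, filter_filter]
  simp only [stepFactor, hneed, hrt, Pi.add_apply]
  rw [if_pos fun i => by rw [hcount i]; omega, kW_snoc, hfar]
  simp only [hexp]
  ring

lemma ite_kW_mul_stepFactor {n : ℕ} (c : Fin (n + 1) → Fin p) (κ : Fin p → ℕ) (l : Fin p) :
    (if cellConfig c = κ - delta l
      then kW k w r rt c * stepFactor k w r rt (n + 1) κ (lastCells k c) l else 0) =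
      if cellConfig c + delta l = κ
        then kW k w r rt (Fin.snoc c l : Fin (n + 2) → Fin p) else 0 := by
  by_cases hκ : cellConfig c + delta l = κ
  · subst hκ
    rw [if_pos (add_tsub_cancel_right _ _).symm, if_pos rfl, kW_snoc_eq_mul_stepFactor]
  · rw [if_neg hκ, ite_eq_right_iff]
    intro hc
    have hl : κ l = 0 := by
      by_contra hl
      refine hκ (funext fun i => ?_)
      simp only [hc, Pi.add_apply, Pi.sub_apply, delta]
      split_ifs with hi
      · subst hi; omega
      · omega
    rw [stepFactor_eq_zero k w r rt _ hl, mul_zero]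

end Weight

section Table

variable {R : Type*} [CommRing R] {k : ℕ} (w : Fin p → R) (r : Fin p → Fin p → R)
  (rt : ℕ → Fin p → Fin p → R)

lemma Tk_one (κ : Fin p → ℕ) (t : Fin k → Fin p) :
    Tk k w r rt 1 κ t =
      ∑ c : Fin 1 → Fin p with cellConfig c = κ ∧ lastCells k c = t, kW k w r rt c := by
  rw [Tk, sum_filter]
  refine Fintype.sum_equiv (Equiv.funUnique (Fin 1) (Fin p)).symm _ _ fun l => ?_
  have hwindow : lastCells k (uniqueElim l : Fin 1 → Fin p) = fun _ => l := by
    funext j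
    simp [lastCells]
  simp only [Equiv.funUnique_symm_apply, cellConfig_fin_one, kW_fin_one, hwindow,
    uniqueElim_const, eq_comm]

theorem Tk_succ_eq_sum (hk : 0 < k) (n : ℕ) (κ : Fin p → ℕ) (t : Fin k → Fin p) :
    Tk k w r rt (n + 1) κ t =
      ∑ c : Fin (n + 1) → Fin p with cellConfig c = κ ∧ lastCells k c = t, kW k w r rt c := by
  induction n generalizing κ t with
  | zero => exact Tk_one w r rt κ t
  | succ n ih =>
    have hstep : ∀ uk, Tk k w r rt (n + 1) (κ - delta (t ⟨0, hk⟩)) (shiftIn t uk) *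
        stepFactor k w r rt (n + 1) κ (shiftIn t uk) (t ⟨0, hk⟩) =
        ∑ c : Fin (n + 1) → Fin p,
          if cellConfig c = κ - delta (t ⟨0, hk⟩) ∧ lastCells k c = shiftIn t uk then
            kW k w r rt c * stepFactor k w r rt (n + 1) κ (lastCells k c) (t ⟨0, hk⟩)
          else 0 := by
      intro uk
      rw [ih, sum_filter, sum_mul]
      refine sum_congr rfl fun c _ => ?_
      split_ifs with h
      · rw [h.2]
      · rw [zero_mul]
    rw [Tk_add_two k w r rt hk, Fintype.sum_congr _ _ hstep, sum_comm, sum_filter,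
      sum_pi_fin_succ_eq_sum_snoc (n := n + 1)]
    refine sum_congr rfl fun c _ => ?_
    rw [sum_ite_lastCells_eq_shiftIn hk,
      sum_ite_lastCells_snoc hk c t (fun c' => cellConfig c' = κ) (kW k w r rt), cellConfig_snoc]
    by_cases hwindow : lastCells k (Fin.snoc c (t ⟨0, hk⟩) : Fin (n + 2) → Fin p) = t
    · simp only [hwindow, and_true]
      exact ite_kW_mul_stepFactor k w r rt c κ _
    · simp only [hwindow, and_false, if_false]

end Table

end

theorem stmt16_general {R : Type*} [CommRing R] {p : ℕ} (k : ℕ) (hk : 1 ≤ k)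
    (w : Fin p → R) (r : Fin p → Fin p → R) (rt : ℕ → Fin p → Fin p → R)
    (n : ℕ) (hn : k < n) :
    ∑ κ ∈ Finset.Nat.antidiagonalTuple p n, ∑ t : Fin k → Fin p, Tk k w r rt n κ t =
      ∑ c : Fin n → Fin p, kW k w r rt c := by
  obtain ⟨m, rfl⟩ : ∃ m, n = m + 1 := ⟨n - 1, by omega⟩
  simp only [Tk_succ_eq_sum w r rt hk, ← filter_filter, sum_fiberwise]
  exact sum_fiberwise_of_maps_to
    (fun c _ => Finset.Nat.mem_antidiagonalTuple.2 (sum_cellConfig c)) _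

theorem stmt16 {R : Type*} [CommRing R] {p : ℕ} (hp : 1 ≤ p) (k : ℕ) (hk : 1 ≤ k)
    (w : Fin p → R) (r : Fin p → Fin p → R) (rt : ℕ → Fin p → Fin p → R)
    (n : ℕ) (hn : k < n) :
    ∑ κ ∈ Finset.Nat.antidiagonalTuple p n, ∑ t : Fin k → Fin p, Tk k w r rt n κ t =
      ∑ c : Fin n → Fin p, kW k w r rt c :=
  stmt16_general k hk w r rt n hn
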